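/- For any three smooth vector fields u, b, Γ̃ on ℝ³ (without assuming ∇·Γ̃ = 0), the identity b×[∇×(u×Γ̃)] + u×[∇×(Γ̃×b)] + Γ̃×[u,b] + (u×b)(∇·Γ̃) + ∇(u·(b×Γ̃)) = 0 holds. -/

import Mathlib

open scoped BigOperators
open MeasureTheory

noncomputable section

abbrev V3 : Type := Fin 3 → ℝ

/-- Partial derivative of a scalar field in coordinate direction `i`. -/
noncomputable def pd (f : V3 → ℝ) (i : Fin 3) (x : V3) : ℝ :=
  fderiv ℝ f x (Pi.single i 1)

/-- Gradient of a scalar field on ℝ³. -/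
noncomputable def grad3 (f : V3 → ℝ) (x : V3) : V3 := fun i => pd f i x

/-- Divergence of a vector field on ℝ³. -/
noncomputable def div3 (F : V3 → V3) (x : V3) : ℝ := ∑ i, pd (fun y => F y i) i x

/-- Curl of a vector field on ℝ³. -/
noncomputable def curl3 (F : V3 → V3) (x : V3) : V3 :=
  ![pd (fun y => F y 2) 1 x - pd (fun y => F y 1) 2 x,
    pd (fun y => F y 0) 2 x - pd (fun y => F y 2) 0 x,
    pd (fun y => F y 1) 0 x - pd (fun y => F y 0) 1 x]

/-- Cross product in ℝ³. -/
def cross3 (a b : V3) : V3 :=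
  ![a 1 * b 2 - a 2 * b 1, a 2 * b 0 - a 0 * b 2, a 0 * b 1 - a 1 * b 0]

/-- Dot product in ℝ³. -/
def dot3 (a b : V3) : ℝ := ∑ i, a i * b i

/-- Advective derivative (F·∇)G of a vector field G along F. -/
noncomputable def advD (F G : V3 → V3) (x : V3) : V3 :=
  fun j => ∑ i, F x i * pd (fun y => G y j) i x

/-- Time partial derivative of a time-dependent vector field. -/
noncomputable def dtV (F : ℝ → V3 → V3) (t : ℝ) (x : V3) : V3 :=
  fun i => deriv (fun s => F s x i) t

/-- Time partial derivative of a time-dependent scalar field. -/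
noncomputable def dtS (f : ℝ → V3 → ℝ) (t : ℝ) (x : V3) : ℝ :=
  deriv (fun s => f s x) t

/-- Smooth time-dependent vector field. -/
def SmoothTV (F : ℝ → V3 → V3) : Prop := ContDiff ℝ (⊤ : ℕ∞) (Function.uncurry F)

/-- Smooth time-dependent scalar field. -/
def SmoothTS (f : ℝ → V3 → ℝ) : Prop := ContDiff ℝ (⊤ : ℕ∞) (Function.uncurry f)

/-- Smooth (static) vector field. -/
def SmoothV (F : V3 → V3) : Prop := ContDiff ℝ (⊤ : ℕ∞) F

/-- Smooth (static) scalar field. -/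
def SmoothS (f : V3 → ℝ) : Prop := ContDiff ℝ (⊤ : ℕ∞) f

/-! By the Leibniz rule, every term of the identity is linear in the first partial derivatives
of `u`, `b`, `Γ̃`, with coefficients polynomial in their values at the point. The identity is
therefore a polynomial identity in 9 values and 27 partial derivatives, checked by `ring`. -/

def pdV (F : V3 → V3) (i : Fin 3) (x : V3) : V3 := fun j => pd (fun y => F y j) i x

/-- The curl, read off from the partial derivatives `D i j = ∂ᵢFⱼ`. -/
def curlOfPartials (D : Fin 3 → V3) : V3 := ![D 1 2 - D 2 1, D 2 0 - D 0 2, D 0 1 - D 1 0]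

section Leibniz

variable {x : V3}

lemma pd_sub {f g : V3 → ℝ} (hf : DifferentiableAt ℝ f x) (hg : DifferentiableAt ℝ g x)
    (i : Fin 3) : pd (fun y => f y - g y) i x = pd f i x - pd g i x := by
  simp only [pd, fderiv_fun_sub hf hg, sub_apply]

lemma pd_mul {f g : V3 → ℝ} (hf : DifferentiableAt ℝ f x) (hg : DifferentiableAt ℝ g x)
    (i : Fin 3) : pd (fun y => f y * g y) i x = pd f i x * g x + f x * pd g i x := by
  simp only [pd, fderiv_fun_mul hf hg, add_apply, smul_apply, smul_eq_mul]
  ring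

lemma pd_sum {ι : Type*} (s : Finset ι) {f : ι → V3 → ℝ}
    (hf : ∀ j ∈ s, DifferentiableAt ℝ (f j) x) (i : Fin 3) :
    pd (fun y => ∑ j ∈ s, f j y) i x = ∑ j ∈ s, pd (f j) i x := by
  simp only [pd, fderiv_fun_sum hf, sum_apply]

variable {u v : V3 → V3}

lemma DifferentiableAt.cross3 (hu : DifferentiableAt ℝ u x) (hv : DifferentiableAt ℝ v x) :
    DifferentiableAt ℝ (fun y => cross3 (u y) (v y)) x := by
  refine differentiableAt_pi.mpr fun j => ?_
  fin_cases j <;> simp only [_root_.cross3] <;> simp <;> fun_prop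

lemma pdV_cross3 (hu : DifferentiableAt ℝ u x) (hv : DifferentiableAt ℝ v x) (i : Fin 3) :
    pdV (fun y => cross3 (u y) (v y)) i x =
      cross3 (pdV u i x) (v x) + cross3 (u x) (pdV v i x) := by
  ext j
  fin_cases j <;> simp (disch := fun_prop) [pdV, cross3, pd_sub, pd_mul] <;> ring

lemma pd_dot3 (hu : DifferentiableAt ℝ u x) (hv : DifferentiableAt ℝ v x) (i : Fin 3) :
    pd (fun y => dot3 (u y) (v y)) i x = dot3 (pdV u i x) (v x) + dot3 (u x) (pdV v i x) := by
  simp only [dot3, pdV]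
  rw [pd_sum _ (fun j _ => by fun_prop), ← Finset.sum_add_distrib]
  exact Finset.sum_congr rfl fun j _ => pd_mul (by fun_prop) (by fun_prop) i

lemma curl3_cross3 (hu : DifferentiableAt ℝ u x) (hv : DifferentiableAt ℝ v x) :
    curl3 (fun y => cross3 (u y) (v y)) x =
      curlOfPartials fun i => cross3 (pdV u i x) (v x) + cross3 (u x) (pdV v i x) := by
  simp only [← pdV_cross3 hu hv]
  rfl

lemma grad3_dot3 (hu : DifferentiableAt ℝ u x) (hv : DifferentiableAt ℝ v x) :
    grad3 (fun y => dot3 (u y) (v y)) x =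
      fun i => dot3 (pdV u i x) (v x) + dot3 (u x) (pdV v i x) :=
  funext (pd_dot3 hu hv)

end Leibniz

lemma div3_eq_sum_pdV (F : V3 → V3) (x : V3) : div3 F x = ∑ i, pdV F i x i := rfl

lemma advD_eq_sum_pdV (F G : V3 → V3) (x : V3) : advD F G x = ∑ i, F x i • pdV G i x := by
  ext j
  simp [advD, pdV, Finset.sum_apply]

theorem cross3_curl_identity_of_partials (u b G : V3) (Du Db DG : Fin 3 → V3) :
    cross3 b (curlOfPartials fun i => cross3 (Du i) G + cross3 u (DG i))
      + cross3 u (curlOfPartials fun i => cross3 (DG i) b + cross3 G (Db i))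
      + cross3 G (∑ i, u i • Db i - ∑ i, b i • Du i)
      + (∑ i, DG i i) • cross3 u b
      + (fun i => dot3 (Du i) (cross3 b G) + dot3 u (cross3 (Db i) G + cross3 b (DG i))) = 0 := by
  ext k
  fin_cases k <;> simp [cross3, curlOfPartials, dot3, Fin.sum_univ_three] <;> ring

theorem vector_identity_general
    (u b G : V3 → V3) (hu : SmoothV u) (hb : SmoothV b) (hG : SmoothV G) :
    ∀ x, cross3 (b x) (curl3 (fun y => cross3 (u y) (G y)) x)
      + cross3 (u x) (curl3 (fun y => cross3 (G y) (b y)) x)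
      + cross3 (G x) (advD u b x - advD b u x)
      + div3 G x • cross3 (u x) (b x)
      + grad3 (fun y => dot3 (u y) (cross3 (b y) (G y))) x = 0 := by
  intro x
  have hu := (hu.differentiable (by simp)).differentiableAt (x := x)
  have hb := (hb.differentiable (by simp)).differentiableAt (x := x)
  have hG := (hG.differentiable (by simp)).differentiableAt (x := x)
  rw [curl3_cross3 hu hG, curl3_cross3 hG hb, grad3_dot3 hu (hb.cross3 hG),
    advD_eq_sum_pdV, advD_eq_sum_pdV, div3_eq_sum_pdV]
  simp only [pdV_cross3 hb hG]
  exact cross3_curl_identity_of_partials _ _ _ _ _ _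

end
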